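/- Let n ≥ 1, μ ∈ ℝⁿ, and Σ a positive definite symmetric real n×n matrix, and let ν = ν_{μ,Σ} be the corresponding Gaussian measure on ℝⁿ. With M(x) = −(1/2)Σ⁻¹ + (1/2)Σ⁻¹(x−μ)(x−μ)ᵀΣ⁻¹ and Y(x) = Σ⁻¹(x−μ), for all indices a, b, c, d, e one has ∫ Y(x)_a·M(x)_{bc}·M(x)_{de} dν(x) = 0. (This is the vanishing of the Amari–Chentsov component C_{μΣΣ} of the multivariate Gaussian family.) -/

import Mathlib

/-! The reflection `x ↦ 2μ - x` preserves the Gaussian density and the score `M`, and negates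
`Y`; hence the integrand `Y_a M_{bc} M_{de}` is odd about the mean and integrates to zero
against the reflection-invariant measure `ν`. -/

open MeasureTheory Matrix Real

/-- The Lebesgue density of the multivariate Gaussian distribution with mean `μ` and
covariance matrix `S` on `ℝⁿ`. -/
noncomputable def mvGaussDensity {n : ℕ} (μ : Fin n → ℝ) (S : Matrix (Fin n) (Fin n) ℝ)
    (x : Fin n → ℝ) : ℝ :=
  (2 * π) ^ (-(n : ℝ) / 2) * S.det ^ (-(1 : ℝ) / 2) *
    Real.exp (-(1 / 2) * ((x - μ) ⬝ᵥ (S⁻¹ *ᵥ (x - μ))))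

/-- The multivariate Gaussian measure `ν_{μ,Σ}` on `ℝⁿ`, given by its Lebesgue density. -/
noncomputable def mvGaussMeasure {n : ℕ} (μ : Fin n → ℝ) (S : Matrix (Fin n) (Fin n) ℝ) :
    Measure (Fin n → ℝ) :=
  volume.withDensity fun x => ENNReal.ofReal (mvGaussDensity μ S x)

/-- The score of the multivariate Gaussian log-likelihood with respect to the covariance
parameter: M(x) = −(1/2)Σ⁻¹ + (1/2)Σ⁻¹(x−μ)(x−μ)ᵀΣ⁻¹. -/
noncomputable def mvScoreSigma {n : ℕ} (μ : Fin n → ℝ) (S : Matrix (Fin n) (Fin n) ℝ)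
    (x : Fin n → ℝ) : Matrix (Fin n) (Fin n) ℝ :=
  (-(1 / 2) : ℝ) • S⁻¹ + ((1 / 2) : ℝ) • (S⁻¹ * Matrix.vecMulVec (x - μ) (x - μ) * S⁻¹)

theorem add_self_sub_sub_self {G : Type*} [AddCommGroup G] (a x : G) :
    (a + a - x) - a = -(x - a) := by
  abel

theorem integral_eq_zero_of_sub_left_eq_neg {G E : Type*} [MeasurableSpace G] [AddGroup G]
    [MeasurableAdd G] [MeasurableNeg G] [NormedAddCommGroup E] [NormedSpace ℝ E]
    (μ : Measure G) [μ.IsNegInvariant] [μ.IsAddLeftInvariant] (c : G) {f : G → E}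
    (hf : ∀ x, f (c - x) = -f x) : ∫ x, f x ∂μ = 0 := by
  have h := integral_sub_left_eq_self f μ c
  simp only [hf, integral_neg] at h
  have := IsAddTorsionFree.of_isTorsionFree ℝ E
  exact neg_eq_self.mp h

theorem mvGaussDensity_continuous {n : ℕ} (μ : Fin n → ℝ) (S : Matrix (Fin n) (Fin n) ℝ) :
    Continuous (mvGaussDensity μ S) := by
  unfold mvGaussDensity
  simp only [dotProduct, Matrix.mulVec]
  fun_prop

theorem mvGaussDensity_reflect {n : ℕ} (μ : Fin n → ℝ) (S : Matrix (Fin n) (Fin n) ℝ)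
    (x : Fin n → ℝ) : mvGaussDensity μ S (μ + μ - x) = mvGaussDensity μ S x := by
  rw [mvGaussDensity, add_self_sub_sub_self, mulVec_neg, neg_dotProduct, dotProduct_neg, neg_neg,
    mvGaussDensity]

theorem mvScoreSigma_reflect {n : ℕ} (μ : Fin n → ℝ) (S : Matrix (Fin n) (Fin n) ℝ)
    (x : Fin n → ℝ) : mvScoreSigma μ S (μ + μ - x) = mvScoreSigma μ S x := by
  rw [mvScoreSigma, add_self_sub_sub_self, neg_vecMulVec, vecMulVec_neg, neg_neg, mvScoreSigma]

theorem integral_mvGaussMeasure_eq_zero_of_odd {n : ℕ} {E : Type*} [NormedAddCommGroup E]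
    [NormedSpace ℝ E] (μ : Fin n → ℝ) (S : Matrix (Fin n) (Fin n) ℝ) {g : (Fin n → ℝ) → E}
    (hg : ∀ x, g (μ + μ - x) = -g x) : ∫ x, g x ∂mvGaussMeasure μ S = 0 := by
  have hmeas : Measurable fun x => (mvGaussDensity μ S x).toNNReal :=
    (mvGaussDensity_continuous μ S).measurable.real_toNNReal
  change ∫ x, g x ∂volume.withDensity (fun x => ((mvGaussDensity μ S x).toNNReal : ENNReal)) = 0
  rw [integral_withDensity_eq_integral_smul hmeas]
  exact integral_eq_zero_of_sub_left_eq_neg volume (μ + μ) fun x => by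
    rw [mvGaussDensity_reflect, hg, smul_neg]

theorem mvGaussian_AC_mu_Sigma_Sigma_general (n : ℕ) (μ : Fin n → ℝ)
    (S : Matrix (Fin n) (Fin n) ℝ) (a b c d e : Fin n) :
    ∫ x, (S⁻¹ *ᵥ (x - μ)) a * mvScoreSigma μ S x b c * mvScoreSigma μ S x d e
        ∂(mvGaussMeasure μ S) = 0 := by
  refine integral_mvGaussMeasure_eq_zero_of_odd μ S fun x => ?_
  rw [mvScoreSigma_reflect, add_self_sub_sub_self, mulVec_neg, Pi.neg_apply]
  ring

/-- The Amari–Chentsov component C_{μΣΣ} of the multivariate Gaussian family vanishes: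
with Y(x) = Σ⁻¹(x−μ), ∫ Y_a M_{bc} M_{de} dν = 0. -/
theorem mvGaussian_AC_mu_Sigma_Sigma (n : ℕ) (hn : 1 ≤ n) (μ : Fin n → ℝ)
    (S : Matrix (Fin n) (Fin n) ℝ) (hS : S.PosDef) (hSsymm : S.IsSymm) (a b c d e : Fin n) :
    ∫ x, (S⁻¹ *ᵥ (x - μ)) a * mvScoreSigma μ S x b c * mvScoreSigma μ S x d e
        ∂(mvGaussMeasure μ S) = 0 :=
  mvGaussian_AC_mu_Sigma_Sigma_general n μ S a b c d e
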